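/- For every real number r with 1 ≤ r ≤ √2, the two-dimensional Lebesgue measure of B(0, r) ∩ Q, i.e. of the intersection of the closed Euclidean disc of radius r centered at the origin with the square Q = [−1,1] × [−1,1], equals 4·√(r² − 1) + r²·(π − 4·arccos(1/r)). -/

import Mathlib

open Real MeasureTheory

/-- The periodic cell `Q = [-1,1] × [-1,1]` of the porous medium. -/
def Qcell : Set (EuclideanSpace ℝ (Fin 2)) :=
  {x | x 0 ∈ Set.Icc (-1 : ℝ) 1 ∧ x 1 ∈ Set.Icc (-1 : ℝ) 1}

/-!
Identify the plane with `ℝ × ℝ`. Over `x ∈ [-1, 1]` the region `B(0, r) ∩ Q` is the segment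
`|y| ≤ min 1 √(r² - x²)`, so by Fubini its area is `∫_{-1}^{1} 2 min 1 √(r² - x²) dx`.
With `a = √(r² - 1) ≤ 1` the minimum is `1` on `[-a, a]` and the circle on the two caps, which
integrate with the primitive `(x √(r² - x²) + r² arcsin (x / r)) / 2`; finally
`arcsin (a / r) = arccos (1 / r)`.
-/

open Set

theorem EuclideanSpace.volume_preserving_finTwoArrow :
    MeasurePreserving ((MeasurableEquiv.toLp 2 (Fin 2 → ℝ)).symm.trans
      MeasurableEquiv.finTwoArrow) volume volume :=
  (MeasureTheory.volume_preserving_finTwoArrow ℝ).comp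
    (EuclideanSpace.volume_preserving_symm_measurableEquiv_toLp (Fin 2))

theorem EuclideanSpace.mem_closedBall_zero_iff_sq {r : ℝ} (hr : 0 ≤ r)
    (x : EuclideanSpace ℝ (Fin 2)) :
    x ∈ Metric.closedBall 0 r ↔ x 0 ^ 2 + x 1 ^ 2 ≤ r ^ 2 := by
  rw [mem_closedBall_zero_iff, ← sq_le_sq₀ (norm_nonneg x) hr, EuclideanSpace.real_norm_sq_eq,
    Fin.sum_univ_two]

theorem volume_setOf_abs_snd_le {s : Set ℝ} (hs : MeasurableSet s) {g : ℝ → ℝ}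
    (hg : Measurable g) :
    volume {p : ℝ × ℝ | p.1 ∈ s ∧ |p.2| ≤ g p.1}
      = ∫⁻ x in s, ENNReal.ofReal (2 * g x) := by
  have hS : MeasurableSet {p : ℝ × ℝ | p.1 ∈ s ∧ |p.2| ≤ g p.1} :=
    (measurable_fst hs).inter (measurableSet_le (by fun_prop) (hg.comp measurable_fst))
  rw [Measure.volume_eq_prod, Measure.prod_apply hS, ← lintegral_indicator hs]
  refine lintegral_congr fun x => ?_
  by_cases hx : x ∈ s
  · have hslice :
        Prod.mk x ⁻¹' {p : ℝ × ℝ | p.1 ∈ s ∧ |p.2| ≤ g p.1} = Icc (-g x) (g x) := by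
      ext y; simp [hx, abs_le]
    simp [hslice, hx, two_mul]
  · simp [hx]

theorem volume_setOf_abs_snd_le_eq_integral {a b : ℝ} (hab : a ≤ b) {g : ℝ → ℝ}
    (hg : Continuous g) (hg0 : ∀ x, 0 ≤ g x) :
    volume {p : ℝ × ℝ | p.1 ∈ Icc a b ∧ |p.2| ≤ g p.1}
      = ENNReal.ofReal (∫ x in a..b, 2 * g x) := by
  have hcont : Continuous fun x => 2 * g x := by fun_prop
  rw [volume_setOf_abs_snd_le measurableSet_Icc hg.measurable,
    ← ofReal_integral_eq_lintegral_ofReal hcont.integrableOn_Icc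
      (Filter.Eventually.of_forall fun x => by have := hg0 x; positivity),
    integral_Icc_eq_integral_Ioc, intervalIntegral.integral_of_le hab]

noncomputable def circleArcPrimitive (r x : ℝ) : ℝ :=
  (x * √(r ^ 2 - x ^ 2) + r ^ 2 * arcsin (x / r)) / 2

theorem circleArcPrimitive_neg (r x : ℝ) :
    circleArcPrimitive r (-x) = -circleArcPrimitive r x := by
  simp only [circleArcPrimitive, neg_sq, neg_div, arcsin_neg]
  ring

theorem continuous_circleArcPrimitive (r : ℝ) : Continuous (circleArcPrimitive r) := by
  unfold circleArcPrimitive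
  have := continuous_arcsin
  fun_prop

theorem hasDerivAt_circleArcPrimitive {r x : ℝ} (hx : x ∈ Ioo (-r) r) :
    HasDerivAt (circleArcPrimitive r) √(r ^ 2 - x ^ 2) x := by
  obtain ⟨hlo, hhi⟩ := hx
  have hr : 0 < r := by linarith
  have hpos : 0 < r ^ 2 - x ^ 2 := by nlinarith
  have hsqrt : HasDerivAt (fun x => √(r ^ 2 - x ^ 2)) (-x / √(r ^ 2 - x ^ 2)) x := by
    convert ((hasDerivAt_pow 2 x).const_sub (r ^ 2)).sqrt hpos.ne' using 1
    field_simp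
    ring
  have hxr : x / r ∈ Ioo (-1) 1 := by
    constructor
    · rw [lt_div_iff₀ hr]; linarith
    · rw [div_lt_one hr]; exact hhi
  have harcsin : HasDerivAt (fun x => arcsin (x / r)) (1 / √(r ^ 2 - x ^ 2)) x := by
    have hs : √(1 - (x / r) ^ 2) = √(r ^ 2 - x ^ 2) / r := by
      rw [show 1 - (x / r) ^ 2 = (r ^ 2 - x ^ 2) / r ^ 2 by field_simp,
        sqrt_div' _ (sq_nonneg r), sqrt_sq hr.le]
    refine ((hasDerivAt_arcsin hxr.1.ne' hxr.2.ne).comp x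
      ((hasDerivAt_id x).div_const r)).congr_deriv ?_
    rw [hs]
    field_simp
  refine ((((hasDerivAt_id' x).mul hsqrt).add (harcsin.const_mul (r ^ 2))).div_const 2
    ).congr_deriv ?_
  have := sq_sqrt hpos.le
  field_simp
  linear_combination -this

theorem integral_sqrt_sq_sub_sq {r a b : ℝ} (hab : a ≤ b) (ha : -r ≤ a) (hb : b ≤ r) :
    ∫ x in a..b, √(r ^ 2 - x ^ 2) = circleArcPrimitive r b - circleArcPrimitive r a :=
  intervalIntegral.integral_eq_sub_of_hasDeriv_right_of_le hab
    (continuous_circleArcPrimitive r).continuousOn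
    (fun x hx => (hasDerivAt_circleArcPrimitive
      ⟨ha.trans_lt hx.1, hx.2.trans_le hb⟩).hasDerivWithinAt)
    (by apply Continuous.intervalIntegrable; fun_prop)

theorem arcsin_sqrt_sq_sub_one_div {r : ℝ} (hr : 1 ≤ r) :
    arcsin (√(r ^ 2 - 1) / r) = arccos (1 / r) := by
  have hr0 : 0 < r := by linarith
  rw [arccos_eq_arcsin (by positivity), show 1 - (1 / r) ^ 2 = (r ^ 2 - 1) / r ^ 2 by field_simp,
    sqrt_div' _ (sq_nonneg r), sqrt_sq hr0.le]

theorem integral_two_mul_min_one_sqrt {r : ℝ} (h1 : 1 ≤ r) (h2 : r ^ 2 ≤ 2) :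
    ∫ x in (-1)..1, 2 * min 1 √(r ^ 2 - x ^ 2)
      = 4 * √(r ^ 2 - 1) + r ^ 2 * (π - 4 * arccos (1 / r)) := by
  set a := √(r ^ 2 - 1) with ha
  have ha0 : 0 ≤ a := sqrt_nonneg _
  have ha2 : a ^ 2 = r ^ 2 - 1 := sq_sqrt (by nlinarith)
  have ha1 : a ≤ 1 := by nlinarith
  have hcap {x : ℝ} (hx : a ≤ |x|) : min 1 √(r ^ 2 - x ^ 2) = √(r ^ 2 - x ^ 2) :=
    min_eq_right (sqrt_le_one.2 (by nlinarith [sq_abs x, abs_nonneg x]))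
  have hcore {x : ℝ} (hx : |x| ≤ a) : min 1 √(r ^ 2 - x ^ 2) = 1 :=
    min_eq_left (one_le_sqrt.2 (by nlinarith [sq_abs x, abs_nonneg x]))
  have hint (u v : ℝ) :
      IntervalIntegrable (fun x => 2 * min 1 √(r ^ 2 - x ^ 2)) volume u v := by
    apply Continuous.intervalIntegrable; fun_prop
  have hleft : ∫ x in (-1)..(-a), 2 * min 1 √(r ^ 2 - x ^ 2)
      = 2 * (circleArcPrimitive r (-a) - circleArcPrimitive r (-1)) := by
    rw [← integral_sqrt_sq_sub_sq (by linarith) (by linarith) (by linarith),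
      ← intervalIntegral.integral_const_mul]
    refine intervalIntegral.integral_congr fun x hx => ?_
    rw [uIcc_of_le (by linarith)] at hx
    rw [hcap (le_abs.2 (Or.inr (by linarith [hx.2])))]
  have hcenter : ∫ x in (-a)..a, 2 * min 1 √(r ^ 2 - x ^ 2) = 4 * a := by
    rw [intervalIntegral.integral_congr (g := fun _ => (2 : ℝ)) fun x hx => ?_]
    · rw [intervalIntegral.integral_const, smul_eq_mul]; ring
    rw [uIcc_of_le (by linarith)] at hx
    rw [hcore (abs_le.2 hx), mul_one]
  have hright : ∫ x in a..1, 2 * min 1 √(r ^ 2 - x ^ 2)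
      = 2 * (circleArcPrimitive r 1 - circleArcPrimitive r a) := by
    rw [← integral_sqrt_sq_sub_sq ha1 (by linarith) h1, ← intervalIntegral.integral_const_mul]
    refine intervalIntegral.integral_congr fun x hx => ?_
    rw [uIcc_of_le ha1] at hx
    rw [hcap (hx.1.trans (le_abs_self x))]
  have hF1 : circleArcPrimitive r 1 = (a + r ^ 2 * arcsin (1 / r)) / 2 := by
    simp [circleArcPrimitive, ha]
  have hFa : circleArcPrimitive r a = (a + r ^ 2 * arccos (1 / r)) / 2 := by
    rw [circleArcPrimitive, ha2, show r ^ 2 - (r ^ 2 - 1) = 1 by ring, sqrt_one, ha,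
      arcsin_sqrt_sq_sub_one_div h1, mul_one]
  rw [← intervalIntegral.integral_add_adjacent_intervals (hint (-1) (-a)) (hint (-a) 1),
    ← intervalIntegral.integral_add_adjacent_intervals (hint (-a) a) (hint a 1), hleft, hcenter,
    hright, circleArcPrimitive_neg, circleArcPrimitive_neg, hF1, hFa,
    arcsin_eq_pi_div_two_sub_arccos]
  ring


theorem closedBall_inter_Qcell_eq_preimage {r : ℝ} (hr : 1 ≤ r) :
    Metric.closedBall 0 r ∩ Qcell
      = ((MeasurableEquiv.toLp 2 (Fin 2 → ℝ)).symm.trans MeasurableEquiv.finTwoArrow) ⁻¹'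
        {p : ℝ × ℝ | p.1 ∈ Icc (-1) 1 ∧ |p.2| ≤ min 1 √(r ^ 2 - p.1 ^ 2)} := by
  ext x
  change _ ↔ x 0 ∈ Icc (-1) 1 ∧ |x 1| ≤ min 1 √(r ^ 2 - x 0 ^ 2)
  rw [mem_inter_iff, EuclideanSpace.mem_closedBall_zero_iff_sq (by linarith)]
  constructor
  · rintro ⟨hball, hx0, hx1⟩
    exact ⟨hx0, le_min (abs_le.2 hx1) (abs_le_sqrt (by linarith))⟩
  · rintro ⟨hx0, hx1⟩
    have hx0sq : x 0 ^ 2 ≤ 1 := sq_le_one_iff_abs_le_one _ |>.2 (abs_le.2 hx0)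
    have hx1sq : x 1 ^ 2 ≤ r ^ 2 - x 0 ^ 2 :=
      (Real.sq_le (by nlinarith)).2 (abs_le.1 (hx1.trans (min_le_right _ _)))
    exact ⟨by linarith, hx0, abs_le.1 (hx1.trans (min_le_left _ _))⟩

/-- Configuration B: for `1 ≤ r ≤ √2`, the area of the solid region `B(0,r) ∩ Q`
equals `4 √(r² - 1) + r² (π - 4 arccos (1/r))`. -/
theorem configB_solid_area (r : ℝ) (h1 : 1 ≤ r) (h2 : r ≤ Real.sqrt 2) :
    volume (Metric.closedBall (0 : EuclideanSpace ℝ (Fin 2)) r ∩ Qcell)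
      = ENNReal.ofReal (4 * Real.sqrt (r ^ 2 - 1) + r ^ 2 * (π - 4 * Real.arccos (1 / r))) := by
  have hr2 : r ^ 2 ≤ 2 := (le_sqrt (by linarith) zero_le_two).1 h2
  rw [closedBall_inter_Qcell_eq_preimage h1,
    EuclideanSpace.volume_preserving_finTwoArrow.measure_preimage_equiv,
    volume_setOf_abs_snd_le_eq_integral (g := fun x => min 1 √(r ^ 2 - x ^ 2)) (by norm_num)
      (by fun_prop) fun x => le_min zero_le_one (sqrt_nonneg _),
    integral_two_mul_min_one_sqrt h1 hr2]
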